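/- Suppose m ≤ n, M > (d₂ (n−m) ‖w_2 − ℓ_2‖)^{n/m} with d₂ = 12, n ≥ 5, and χ_{m,n}(M) ≥ 1/2. Then for all but at most a fraction 1/2^n of m×n integer matrices A with entries in {1,...,M} and linearly independent rows, the shortest nonzero vector of L_N(A) = { x ∈ Z^n : Ax = 0 } has norm greater than γ_{n−m} ‖w_2 − ℓ_2‖, where γ_j = max{C_1,...,C_j} and C_i is Hermite's constant. -/

import Mathlib

/-- The Gram-Schmidt orthogonalization of a finite family of vectors. -/
noncomputable def gsE {E : Type*} [NormedAddCommGroup E] [InnerProductSpace ℝ E] {r : ℕ}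
    (c : Fin r → E) : Fin r → E :=
  haveI : WellFoundedLT (Fin r) := inferInstance
  InnerProductSpace.gramSchmidt ℝ c

/-- The lattice generated by a family of vectors: all integer combinations. -/
noncomputable def latE {E : Type*} [NormedAddCommGroup E] [InnerProductSpace ℝ E] {r : ℕ}
    (c : Fin r → E) : AddSubgroup E :=
  AddSubgroup.closure (Set.range c)

/-- The length of a shortest nonzero vector of the lattice generated by `c`. -/
noncomputable def lambda1 {E : Type*} [NormedAddCommGroup E] [InnerProductSpace ℝ E] {r : ℕ}
    (c : Fin r → E) : ℝ :=
  sInf { t | ∃ v ∈ latE c, v ≠ 0 ∧ ‖v‖ = t }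

/-- The determinant of the lattice with basis `c` : the square root of the
Gram determinant of `c`. -/
noncomputable def latDet {E : Type*} [NormedAddCommGroup E] [InnerProductSpace ℝ E] {r : ℕ}
    (c : Fin r → E) : ℝ :=
  Real.sqrt (Matrix.det (Matrix.of fun i j : Fin r => (inner ℝ (c i) (c j) : ℝ)))

/-- Hermite's constant of rank `j`. -/
noncomputable def hermiteC (j : ℕ) : ℝ :=
  sSup { t | ∃ c : Fin j → EuclideanSpace ℝ (Fin j), LinearIndependent ℝ c ∧
    t = lambda1 c ^ 2 / latDet c ^ ((2 : ℝ) / j) }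

/-- `γ_j = max {C_1, ..., C_j}`. -/
noncomputable def gammaH (j : ℕ) : ℝ := sSup (hermiteC '' Set.Icc 1 j)

/-- Projection onto the orthogonal complement of the span of a set. -/
noncomputable def projPerp {E : Type*} [NormedAddCommGroup E] [InnerProductSpace ℝ E]
    [FiniteDimensional ℝ E] (S : Set E) (v : E) : E :=
  (Submodule.orthogonalProjectionOnto (Submodule.span ℝ S)ᗮ v : E)

/-- A family `c_0, ..., c_{r-1}` is Korkhine-Zolotarev reduced if for each `i`, the projection
`c_i(i)` of `c_i` onto the orthogonal complement of `span(c_0, ..., c_{i-1})` is a shortest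
nonzero vector of the lattice generated by the projections of the `c_j` onto that complement. -/
def KZReduced {E : Type*} [NormedAddCommGroup E] [InnerProductSpace ℝ E]
    [FiniteDimensional ℝ E] {r : ℕ} (c : Fin r → E) : Prop :=
  ∀ i : Fin r,
    ∀ v ∈ latE (fun j => projPerp (c '' { j : Fin r | j < i }) (c j)),
      v ≠ 0 → ‖projPerp (c '' { j : Fin r | j < i }) (c i)‖ ≤ ‖v‖

/-- A basis `b_0, ..., b_{r-1}` of a lattice is RKZ reduced if its reciprocal basis
(the unique family `b'` in the span with `⟨b_i, b'_j⟩ = 1` if `i + j = r + 1` (1-indexed)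
and `0` otherwise) is Korkhine-Zolotarev reduced. -/
def RKZReduced {E : Type*} [NormedAddCommGroup E] [InnerProductSpace ℝ E]
    [FiniteDimensional ℝ E] {r : ℕ} (b : Fin r → E) : Prop :=
  ∃ b' : Fin r → E,
    (∀ j, b' j ∈ Submodule.span ℝ (Set.range b)) ∧
    (∀ i j : Fin r, (inner ℝ (b i) (b' j) : ℝ) =
      if (i : ℕ) + (j : ℕ) + 1 = r then 1 else 0) ∧
    KZReduced b'

/-- The Euclidean norm of an integer vector. -/
noncomputable def intNorm {n : ℕ} (v : Fin n → ℤ) : ℝ :=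
  Real.sqrt (∑ i, ((v i : ℝ)) ^ 2)

/-!
Minkowski's convex body theorem, applied to the cube `[-t, t]^j` with `t^j = det L`, gives
`λ₁(L) ≤ √j · det(L)^(1/j)`; hence `C_j ≤ j` and `γ_j ≤ j`.

A bad matrix kills a nonzero integer vector `v` with `‖v‖ ≤ R := γ_{n-m} ‖w₂ - ℓ₂‖`, so all
`|v_i| ≤ ⌊R⌋`. A fixed `v ≠ 0` is killed by at most `M^((n-1)m)` matrices with entries in
`{1, ..., M}`, since in each row the entry at a coordinate where `v` is nonzero is determined by
the others. Summing over the at most `(2⌊R⌋ + 1)^n ≤ (3R)^n` candidates and using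
`(12 (n-m) ‖w₂ - ℓ₂‖)^n < M^m` and `χ ≥ 1/2` gives the bound; if `R < 1` no matrix is bad.
-/

open MeasureTheory Module Submodule Matrix Finset

section Minkowski

variable {j : ℕ}

theorem latDet_eq_abs_det (c : Fin j → EuclideanSpace ℝ (Fin j)) :
    latDet c = |(EuclideanSpace.basisFun (Fin j) ℝ).toBasis.det c| := by
  have hgram : (Matrix.of fun i k : Fin j => (inner ℝ (c i) (c k) : ℝ)) =
      (Matrix.of fun i k => c i k) * (Matrix.of fun i k => c i k)ᵀ := by
    ext i k
    simp [Matrix.mul_apply, PiLp.inner_apply, mul_comm]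
  rw [latDet, hgram, Matrix.det_mul, Matrix.det_transpose, ← sq, Real.sqrt_sq_eq_abs,
    Basis.det_apply, ← Matrix.det_transpose]
  rfl

theorem latDet_pos {c : Fin j → EuclideanSpace ℝ (Fin j)} (hc : LinearIndependent ℝ c) :
    0 < latDet c := by
  rw [latDet_eq_abs_det, abs_pos]
  exact (Basis.is_basis_iff_det _).mp ⟨hc, hc.span_eq_top_of_card_eq_finrank' (by simp)⟩ |>.ne_zero

theorem volume_fundamentalDomain_eq_ofReal_latDet (b : Basis (Fin j) ℝ (EuclideanSpace ℝ (Fin j))) :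
    volume (ZSpan.fundamentalDomain b) = ENNReal.ofReal (latDet ⇑b) := by
  rw [ZSpan.measure_fundamentalDomain b volume (EuclideanSpace.basisFun (Fin j) ℝ).toBasis,
    measure_congr (ZSpan.fundamentalDomain_ae_parallelepiped _ volume),
    OrthonormalBasis.coe_toBasis, OrthonormalBasis.volume_parallelepiped, mul_one,
    latDet_eq_abs_det]

theorem lambda1_nonneg {E : Type*} [NormedAddCommGroup E] [InnerProductSpace ℝ E] {r : ℕ}
    (c : Fin r → E) : 0 ≤ lambda1 c :=
  Real.sInf_nonneg (by rintro _ ⟨v, -, -, rfl⟩; exact norm_nonneg v)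

theorem lambda1_le_norm {E : Type*} [NormedAddCommGroup E] [InnerProductSpace ℝ E] {r : ℕ}
    {c : Fin r → E} {v : E} (hv : v ∈ latE c) (hv0 : v ≠ 0) : lambda1 c ≤ ‖v‖ :=
  csInf_le ⟨0, by rintro _ ⟨w, -, -, rfl⟩; exact norm_nonneg w⟩ ⟨v, hv, hv0, rfl⟩

theorem exists_mem_latE_ne_zero_abs_le (hj : 1 ≤ j) (b : Basis (Fin j) ℝ (EuclideanSpace ℝ (Fin j)))
    {t : ℝ} (ht0 : 0 ≤ t) (ht : latDet ⇑b ≤ t ^ j) : ∃ v ∈ latE ⇑b, v ≠ 0 ∧ ∀ k, |v k| ≤ t := by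
  have : Nonempty (Fin j) := ⟨⟨0, hj⟩⟩
  have : Countable (span ℤ (Set.range b)).toAddSubgroup :=
    inferInstanceAs (Countable (span ℤ (Set.range b)))
  set cube : Set (EuclideanSpace ℝ (Fin j)) :=
    EuclideanSpace.equiv (Fin j) ℝ ⁻¹' Metric.closedBall 0 t
  have hvol : volume (ZSpan.fundamentalDomain b) * 2 ^ finrank ℝ (EuclideanSpace ℝ (Fin j)) ≤
      volume cube := by
    have hcube : volume cube = volume (Metric.closedBall (0 : Fin j → ℝ) t) :=
      (PiLp.volume_preserving_ofLp (Fin j)).measure_preimage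
        measurableSet_closedBall.nullMeasurableSet
    rw [volume_fundamentalDomain_eq_ofReal_latDet, finrank_euclideanSpace_fin, hcube,
      Real.volume_pi_closedBall _ ht0, Fintype.card_fin, mul_pow, mul_comm,
      ENNReal.ofReal_mul (by positivity), ENNReal.ofReal_pow zero_le_two, ENNReal.ofReal_ofNat]
    gcongr
  obtain ⟨x, hx0, hx⟩ := exists_ne_zero_mem_lattice_of_measure_mul_two_pow_le_measure
    (ZSpan.isAddFundamentalDomain' b volume) (fun x hx => by simpa [cube] using hx)
    ((convex_closedBall 0 t).linear_preimage (EuclideanSpace.equiv (Fin j) ℝ).toLinearMap)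
    ((EuclideanSpace.equiv (Fin j) ℝ).toHomeomorph.isCompact_preimage.mpr
      (isCompact_closedBall 0 t)) hvol
  refine ⟨x, ?_, by simpa using hx0, by simpa [cube, pi_norm_le_iff_of_nonneg ht0] using hx⟩
  rw [latE, ← span_int_eq_addSubgroupClosure]
  exact x.2

theorem norm_le_sqrt_mul_of_abs_le {x : EuclideanSpace ℝ (Fin j)} {t : ℝ} (ht0 : 0 ≤ t)
    (hx : ∀ k, |x k| ≤ t) : ‖x‖ ≤ √j * t := by
  rw [EuclideanSpace.norm_eq, ← Real.sqrt_sq ht0, ← Real.sqrt_mul (Nat.cast_nonneg _)]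
  gcongr
  calc ∑ k, ‖x k‖ ^ 2 ≤ ∑ _k : Fin j, t ^ 2 := by
        gcongr with k
        exact hx k
    _ = j * t ^ 2 := by simp

theorem lambda1_le_sqrt_mul_latDet_rpow (hj : 1 ≤ j) {c : Fin j → EuclideanSpace ℝ (Fin j)}
    (hc : LinearIndependent ℝ c) : lambda1 c ≤ √j * latDet c ^ ((1 : ℝ) / j) := by
  set b := basisOfLinearIndependentOfCardEqFinrank' c hc (by simp)
  have hb : ⇑b = c := coe_basisOfLinearIndependentOfCardEqFinrank' c hc _
  have hd := (latDet_pos hc).le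
  obtain ⟨v, hv, hv0, hvt⟩ := exists_mem_latE_ne_zero_abs_le hj b (Real.rpow_nonneg hd _) (by
    rw [hb, ← Real.rpow_mul_natCast hd, one_div_mul_cancel (by positivity), Real.rpow_one])
  rw [hb] at hv
  exact (lambda1_le_norm hv hv0).trans (norm_le_sqrt_mul_of_abs_le (Real.rpow_nonneg hd _) hvt)

theorem hermiteC_le (hj : 1 ≤ j) : hermiteC j ≤ j := by
  refine Real.sSup_le ?_ (Nat.cast_nonneg j)
  rintro _ ⟨c, hc, rfl⟩
  have hd := latDet_pos hc
  rw [div_le_iff₀ (by positivity)]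
  calc lambda1 c ^ 2 ≤ (√j * latDet c ^ ((1 : ℝ) / j)) ^ 2 :=
        pow_le_pow_left₀ (lambda1_nonneg c) (lambda1_le_sqrt_mul_latDet_rpow hj hc) 2
    _ = j * latDet c ^ ((2 : ℝ) / j) := by
        rw [mul_pow, Real.sq_sqrt (Nat.cast_nonneg j), ← Real.rpow_mul_natCast hd.le]
        ring_nf

theorem gammaH_le (j : ℕ) : gammaH j ≤ j := by
  refine Real.sSup_le ?_ (Nat.cast_nonneg j)
  rintro _ ⟨i, ⟨hi, hij⟩, rfl⟩
  exact (hermiteC_le hi).trans (by exact_mod_cast hij)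

theorem gammaH_zero : gammaH 0 = 0 := by
  simp [gammaH]

end Minkowski

section Counting

variable {R ι κ : Type*} [Fintype ι] [DecidableEq ι] [Fintype κ] [DecidableEq κ]

theorem card_filter_dotProduct_eq_zero_le [Ring R] [NoZeroDivisors R] [DecidableEq R]
    (s : Finset R) {v : κ → R} (hv : v ≠ 0) :
    #{w ∈ Fintype.piFinset fun _ : κ => s | w ⬝ᵥ v = 0} ≤ #s ^ (Fintype.card κ - 1) := by
  obtain ⟨i₀, hi₀⟩ := Function.ne_iff.mp hv
  have hcard : #(Fintype.piFinset fun _ : {i // i ≠ i₀} => s) = #s ^ (Fintype.card κ - 1) := by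
    simp [Fintype.card_subtype_compl]
  rw [← hcard]
  refine card_le_card_of_injOn (fun w i => w i) (fun w hw => by simp_all) ?_
  intro w hw w' hw' hww'
  simp only [coe_filter, Set.mem_ofPred_eq] at hw hw'
  have hsingle : w - w' = Pi.single i₀ ((w - w') i₀) := by
    ext i
    by_cases hi : i = i₀
    · simp [hi]
    · simpa [hi, sub_eq_zero] using congr_fun hww' ⟨i, hi⟩
  have : (w - w') i₀ * v i₀ = 0 := by
    rw [← single_dotProduct, ← hsingle, sub_dotProduct, hw.2, hw'.2, sub_zero]
  rw [← sub_eq_zero, hsingle, (mul_eq_zero.mp this).resolve_right hi₀, Pi.single_zero]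

theorem card_filter_forall_dotProduct_eq_zero_le [Ring R] [NoZeroDivisors R] [DecidableEq R]
    (s : Finset R) {v : κ → R} (hv : v ≠ 0) :
    #{A ∈ Fintype.piFinset fun _ : ι => Fintype.piFinset fun _ : κ => s | ∀ i, A i ⬝ᵥ v = 0} ≤
      #s ^ ((Fintype.card κ - 1) * Fintype.card ι) := by
  calc #{A ∈ Fintype.piFinset fun _ : ι => Fintype.piFinset fun _ : κ => s | ∀ i, A i ⬝ᵥ v = 0}
      = #(Fintype.piFinset fun _ : ι => {w ∈ Fintype.piFinset fun _ : κ => s | w ⬝ᵥ v = 0}) := by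
        congr 1
        ext A
        simp [forall_and]
    _ ≤ #s ^ ((Fintype.card κ - 1) * Fintype.card ι) := by
        rw [Fintype.card_piFinset, prod_const, card_univ, pow_mul]
        exact Nat.pow_le_pow_left (card_filter_dotProduct_eq_zero_le s hv) _

theorem ncard_le_of_forall_exists_mulVec_eq_zero (s : Finset ℤ) (k : ℕ) {S : Set (Matrix ι κ ℤ)}
    (hS : ∀ A ∈ S, (∀ i j, A i j ∈ s) ∧ ∃ v ≠ 0, A *ᵥ v = 0 ∧ ∀ j, |v j| ≤ k) :
    S.ncard ≤ (2 * k + 1) ^ Fintype.card κ * #s ^ ((Fintype.card κ - 1) * Fintype.card ι) := by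
  set cube := (Fintype.piFinset fun _ : κ => Icc (-(k : ℤ)) k).erase 0
  set box : Finset (Matrix ι κ ℤ) := Fintype.piFinset fun _ : ι => Fintype.piFinset fun _ : κ => s
  have hsub : S ⊆ ↑(cube.biUnion fun v => {A ∈ box | ∀ i, A i ⬝ᵥ v = 0}) := by
    intro A hA
    obtain ⟨hA, v, hv0, hAv, hv⟩ := hS A hA
    simp only [cube, coe_biUnion, Set.mem_iUnion, mem_coe, mem_erase, Fintype.mem_piFinset,
      mem_Icc]
    exact ⟨v, ⟨hv0, fun j => abs_le.mp (hv j)⟩,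
      mem_filter.mpr ⟨Fintype.mem_piFinset.mpr fun i => Fintype.mem_piFinset.mpr (hA i),
        fun i => congrFun hAv i⟩⟩
  have hcube : #cube ≤ (2 * k + 1) ^ Fintype.card κ := by
    refine (card_erase_le).trans_eq ?_
    rw [Fintype.card_piFinset, prod_const, card_univ, Int.card_Icc]
    congr 1
    omega
  calc _ ≤ #(cube.biUnion fun v => {A ∈ box | ∀ i, A i ⬝ᵥ v = 0}) :=
        (Set.ncard_le_ncard hsub (finite_toSet _)).trans_eq (Set.ncard_coe_finset _)
    _ ≤ ∑ v ∈ cube, #{A ∈ box | ∀ i, A i ⬝ᵥ v = 0} := card_biUnion_le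
    _ ≤ ∑ _v ∈ cube, #s ^ ((Fintype.card κ - 1) * Fintype.card ι) :=
        sum_le_sum fun v hv => card_filter_forall_dotProduct_eq_zero_le s (ne_of_mem_erase hv)
    _ ≤ _ := by
        rw [sum_const, smul_eq_mul]
        exact Nat.mul_le_mul_right _ hcube

end Counting

section IntNorm

variable {n : ℕ}

theorem abs_le_intNorm (v : Fin n → ℤ) (i : Fin n) : |(v i : ℝ)| ≤ intNorm v :=
  Real.abs_le_sqrt (single_le_sum (f := fun i => (v i : ℝ) ^ 2) (fun _ _ => sq_nonneg _)
    (mem_univ i))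

theorem one_le_intNorm {v : Fin n → ℤ} (hv : v ≠ 0) : 1 ≤ intNorm v := by
  obtain ⟨i, hi⟩ := Function.ne_iff.mp hv
  exact le_trans (by exact_mod_cast Int.one_le_abs hi) (abs_le_intNorm v i)

theorem abs_le_natFloor_of_intNorm_le {v : Fin n → ℤ} {R : ℝ} (h : intNorm v ≤ R) (i : Fin n) :
    |v i| ≤ ⌊R⌋₊ := by
  rw [← Int.natCast_natAbs]
  exact_mod_cast Nat.le_floor <| by
    rw [Nat.cast_natAbs, Int.cast_abs]
    exact (abs_le_intNorm v i).trans h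

end IntNorm

theorem pow_lt_pow_of_rpow_div_lt {c x : ℝ} {m n : ℕ} (hc : 0 ≤ c) (hm : m ≠ 0)
    (h : c ^ ((n : ℝ) / m) < x) : c ^ n < x ^ m := by
  calc c ^ n = (c ^ ((n : ℝ) / m)) ^ m := by
        rw [← Real.rpow_mul_natCast hc, div_mul_cancel₀ _ (by exact_mod_cast hm), Real.rpow_natCast]
    _ < x ^ m := pow_lt_pow_left₀ h (by positivity) hm

theorem two_mul_natFloor_add_one_pow_mul_le {R c : ℝ} (hR : 1 ≤ R) (hRc : R ≤ c) {n : ℕ}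
    (hn : n ≠ 0) : (2 * ⌊R⌋₊ + 1 : ℝ) ^ n * 2 ^ (n + 1) ≤ (12 * c) ^ n := by
  have hfloor : (2 * ⌊R⌋₊ + 1 : ℝ) ≤ 3 * c := by
    linarith [Nat.floor_le (zero_le_one.trans hR)]
  have htwo : (2 : ℝ) ^ (n + 1) ≤ 4 ^ n := by
    rw [show (4 : ℝ) = 2 ^ 2 by norm_num, ← pow_mul]
    exact pow_le_pow_right₀ one_le_two (by omega)
  have hc : 0 ≤ c := by linarith
  calc (2 * ⌊R⌋₊ + 1 : ℝ) ^ n * 2 ^ (n + 1) ≤ (3 * c) ^ n * 4 ^ n := by gcongr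
    _ = (12 * c) ^ n := by rw [← mul_pow]; ring_nf

theorem almost_all_nullspace_lattices_long_general (m n M : ℕ) (hm : 0 < m) (hM : 0 < M)
    (ℓ₂ w₂ : EuclideanSpace ℝ (Fin n))
    (hMbig : ((12 : ℝ) * ((n : ℝ) - m) * ‖w₂ - ℓ₂‖) ^ ((n : ℝ) / m) < M)
    (G' bad : Set (Matrix (Fin m) (Fin n) ℤ))
    (hG' : G' = { A | (∀ i j, A i j ∈ Finset.Icc (1 : ℤ) M) ∧
      LinearIndependent ℚ (fun i : Fin m => fun j : Fin n => (A i j : ℚ)) })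
    (χ : ℝ) (hχ : χ = (G'.ncard : ℝ) / (M : ℝ) ^ (m * n)) (hχhalf : 1 / 2 ≤ χ)
    (hbad : bad = { A ∈ G' | ∃ v : Fin n → ℤ, v ≠ 0 ∧ A.mulVec v = 0 ∧
      intNorm v ≤ gammaH (n - m) * ‖w₂ - ℓ₂‖ }) :
    (bad.ncard : ℝ) ≤ (G'.ncard : ℝ) / 2 ^ n := by
  set R := gammaH (n - m) * ‖w₂ - ℓ₂‖
  rcases lt_or_ge R 1 with hR | hR
  · have hempty : bad = ∅ := by
      refine Set.eq_empty_of_forall_notMem fun A hA => ?_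
      obtain ⟨-, v, hv0, -, hv⟩ := hbad ▸ hA
      exact (one_le_intNorm hv0).not_gt (hv.trans_lt hR)
    simp only [hempty, Set.ncard_empty, Nat.cast_zero]
    positivity
  have hmn : m < n := by
    by_contra h
    simp only [R, Nat.sub_eq_zero_of_le (not_lt.mp h), gammaH_zero, zero_mul] at hR
    linarith
  have hcount : bad.ncard ≤ (2 * ⌊R⌋₊ + 1) ^ n * M ^ ((n - 1) * m) := by
    have := ncard_le_of_forall_exists_mulVec_eq_zero (Icc (1 : ℤ) M) ⌊R⌋₊ (S := bad)
      fun A hA => by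
        obtain ⟨hAG, v, hv0, hAv, hv⟩ := hbad ▸ hA
        exact ⟨(hG' ▸ hAG).1, v, hv0, hAv, abs_le_natFloor_of_intNorm_le hv⟩
    simpa using this
  have hRle : R ≤ ((n : ℝ) - m) * ‖w₂ - ℓ₂‖ := by
    rw [← Nat.cast_sub hmn.le]
    exact mul_le_mul_of_nonneg_right (gammaH_le _) (norm_nonneg _)
  have hcube : (2 * ⌊R⌋₊ + 1 : ℝ) ^ n * 2 ^ (n + 1) ≤ M ^ m :=
    (two_mul_natFloor_add_one_pow_mul_le hR hRle (by omega)).trans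
      (pow_lt_pow_of_rpow_div_lt (by linarith) hm.ne' (by rwa [← mul_assoc])).le
  have hG := (le_div_iff₀ (by positivity)).mp (hχ ▸ hχhalf)
  calc (bad.ncard : ℝ) ≤ (2 * ⌊R⌋₊ + 1) ^ n * M ^ ((n - 1) * m) := by exact_mod_cast hcount
    _ ≤ M ^ m / 2 ^ (n + 1) * M ^ ((n - 1) * m) := by
        gcongr
        rwa [le_div_iff₀ (by positivity)]
    _ = 1 / 2 * M ^ (m * n) / 2 ^ n := by
        obtain ⟨k, rfl⟩ := Nat.exists_eq_add_of_lt hmn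
        simp only [Nat.add_sub_cancel]
        ring
    _ ≤ G'.ncard / 2 ^ n := by gcongr

/-- if `m ≤ n`, `n ≥ 5`, `M > (12 (n-m) ‖w₂ - ℓ₂‖)^{n/m}` and
`χ_{m,n}(M) ≥ 1/2`, then for all but at most a fraction `1/2^n` of the `m × n` integer
matrices with entries in `{1, ..., M}` and linearly independent rows, every nonzero vector of
`L_N(A) = {x ∈ ℤ^n : Ax = 0}` has norm greater than `γ_{n-m} ‖w₂ - ℓ₂‖`. -/
theorem almost_all_nullspace_lattices_long (m n M : ℕ) (hm : 0 < m) (hmn : m ≤ n)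
    (hn : 5 ≤ n) (hM : 0 < M)
    (ℓ₂ w₂ : EuclideanSpace ℝ (Fin n))
    (hMbig : ((12 : ℝ) * ((n : ℝ) - m) * ‖w₂ - ℓ₂‖) ^ ((n : ℝ) / m) < M)
    (G' bad : Set (Matrix (Fin m) (Fin n) ℤ))
    (hG' : G' = { A | (∀ i j, A i j ∈ Finset.Icc (1 : ℤ) M) ∧
      LinearIndependent ℚ (fun i : Fin m => fun j : Fin n => (A i j : ℚ)) })
    (χ : ℝ) (hχ : χ = (G'.ncard : ℝ) / (M : ℝ) ^ (m * n)) (hχhalf : 1 / 2 ≤ χ)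
    (hbad : bad = { A ∈ G' | ∃ v : Fin n → ℤ, v ≠ 0 ∧ A.mulVec v = 0 ∧
      intNorm v ≤ gammaH (n - m) * ‖w₂ - ℓ₂‖ }) :
    (bad.ncard : ℝ) ≤ (G'.ncard : ℝ) / 2 ^ n :=
  almost_all_nullspace_lattices_long_general m n M hm hM ℓ₂ w₂ hMbig G' bad hG' χ hχ hχhalf hbad
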